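/- Let X ~ Exp(1) and let g(x) = x/(x+1)². Then the variance of the normalized SLNR gain g(X)/E[g(X)] is strictly smaller than the variance of X (which equals 1). -/

import Mathlib

/-!
Let `m = E[g(X)]`. Since `0 ≤ g ≤ 1/4`, the Bhatia–Davis inequality bounds the variance of
`g(X)/m`, a variable with mean `1` and values in `[0, 1/(4m)]`, by `1/(4m) - 1`. The tangent-line
bound `(x+1)/2 ≤ exp((x-1)/2)` gives `g(x) ≥ x e^{1-x}/4`, hence `m ≥ (e/4) ∫₀^∞ x e^{-2x} dx = e/16`
and the variance is at most `4/e - 1 < 1`.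
-/

open MeasureTheory Real Set ProbabilityTheory Filter Topology

lemma integral_expMeasure_eq_integral_Ioi {r : ℝ} (hr : 0 ≤ r) (f : ℝ → ℝ) :
    ∫ x, f x ∂expMeasure r = ∫ x in Ioi 0, r * exp (-(r * x)) * f x := by
  rw [expMeasure, gammaMeasure, integral_withDensity_eq_integral_toReal_smul (f := gammaPDF 1 r)
    (measurable_gammaPDFReal 1 r).ennreal_ofReal (ae_of_all _ fun _ ↦ ENNReal.ofReal_lt_top),
    ← integral_Ici_eq_integral_Ioi, ← integral_indicator measurableSet_Ici]
  congr 1 with x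
  by_cases hx : 0 ≤ x
  · simp [indicator_of_mem (mem_Ici.2 hx), gammaPDF_of_nonneg hx, ENNReal.toReal_ofReal,
      hr, (exp_pos _).le]
  · simp [indicator_of_notMem (notMem_Ici.2 (not_le.1 hx)), gammaPDF_of_neg (not_le.1 hx)]

lemma ae_nonneg_expMeasure (r : ℝ) : ∀ᵐ x ∂expMeasure r, 0 ≤ x := by
  rw [ae_iff, show {x : ℝ | ¬0 ≤ x} = Iio 0 by ext; simp, expMeasure, gammaMeasure,
    withDensity_apply _ measurableSet_Iio]
  exact lintegral_gammaPDF_of_nonpos le_rfl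

lemma integral_sub_one_sq_expMeasure_one : ∫ x, (x - 1) ^ 2 ∂expMeasure 1 = 1 := by
  have hderiv : ∀ x ∈ Ici (0 : ℝ),
      HasDerivAt (fun x ↦ -((x ^ 2 + 1) * exp (-x))) (exp (-x) * (x - 1) ^ 2) x := by
    intro x _
    refine (((hasDerivAt_pow 2 x).add_const 1).mul (hasDerivAt_neg x).exp).neg.congr_deriv ?_
    push_cast
    ring
  have hlim : Tendsto (fun x : ℝ ↦ -((x ^ 2 + 1) * exp (-x))) atTop (𝓝 0) := by
    simpa [add_mul] using ((tendsto_pow_mul_exp_neg_atTop_nhds_zero 2).add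
      (tendsto_pow_mul_exp_neg_atTop_nhds_zero 0)).neg
  simp only [integral_expMeasure_eq_integral_Ioi zero_le_one, one_mul]
  rw [integral_Ioi_of_hasDerivAt_of_tendsto' hderiv
    (integrableOn_Ioi_deriv_of_nonneg' hderiv (fun _ _ ↦ by positivity) hlim) hlim]
  simp

lemma integral_mul_exp_one_sub_expMeasure_one :
    ∫ x, x * exp (1 - x) ∂expMeasure 1 = exp 1 / 4 := by
  have hexp (x : ℝ) : exp (-x) * exp (1 - x) = exp 1 * exp (-(2 * x)) := by
    rw [← exp_add, ← exp_add]
    ring_nf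
  have hgamma (x : ℝ) :
      exp (-x) * (x * exp (1 - x)) = exp 1 * (x ^ ((2 : ℝ) - 1) * exp (-(2 * x))) := by
    rw [show (2 : ℝ) - 1 = 1 by norm_num, rpow_one]
    linear_combination x * hexp x
  simp only [integral_expMeasure_eq_integral_Ioi zero_le_one, one_mul, hgamma,
    integral_const_mul, integral_rpow_mul_exp_neg_mul_Ioi two_pos two_pos]
  norm_num [div_eq_mul_inv]

lemma div_sq_add_one_le_quarter (x : ℝ) : x / (x + 1) ^ 2 ≤ 1 / 4 :=
  div_le_of_le_mul₀ (sq_nonneg _) (by norm_num) (by nlinarith [sq_nonneg (x - 1)])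

lemma sq_add_one_le_four_mul_exp {x : ℝ} (hx : -1 ≤ x) : (x + 1) ^ 2 ≤ 4 * exp (x - 1) :=
  calc (x + 1) ^ 2 = 4 * ((x - 1) / 2 + 1) ^ 2 := by ring
    _ ≤ 4 * exp ((x - 1) / 2) ^ 2 := by
        gcongr
        · linarith
        · exact add_one_le_exp _
    _ = 4 * exp (x - 1) := by rw [← exp_nat_mul]; ring_nf

lemma mul_exp_one_sub_div_four_le {x : ℝ} (hx : 0 ≤ x) :
    x * exp (1 - x) / 4 ≤ x / (x + 1) ^ 2 :=
  calc x * exp (1 - x) / 4 = x / (4 * exp (x - 1)) := by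
        rw [← neg_sub, exp_neg]
        field_simp
    _ ≤ x / (x + 1) ^ 2 :=
        div_le_div_of_nonneg_left hx (by positivity) (sq_add_one_le_four_mul_exp (by linarith))

lemma integral_div_integral_sub_one_sq_le {Ω : Type*} [MeasurableSpace Ω] {μ : Measure Ω}
    [IsProbabilityMeasure μ] {f : Ω → ℝ} {c : ℝ} (hf : AEMeasurable f μ)
    (hfc : ∀ᵐ ω ∂μ, f ω ∈ Icc 0 c) (hm : 0 < ∫ ω, f ω ∂μ) :
    ∫ ω, (f ω / ∫ ω', f ω' ∂μ - 1) ^ 2 ∂μ ≤ c / ∫ ω, f ω ∂μ - 1 := by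
  set m := ∫ ω, f ω ∂μ
  have hmean : μ[fun ω ↦ f ω / m] = 1 := by rw [integral_div, div_self hm.ne']
  have hbound : ∀ᵐ ω ∂μ, f ω / m ∈ Icc 0 (c / m) := by
    filter_upwards [hfc] with ω ⟨h0, hc⟩
    exact ⟨by positivity, by gcongr⟩
  have hvar := variance_le_sub_mul_sub hbound (hf.div_const m)
  rw [variance_eq_integral (hf.div_const m), hmean] at hvar
  simpa using hvar

lemma integrable_div_sq_add_one_expMeasure_one :
    Integrable (fun x ↦ x / (x + 1) ^ 2) (expMeasure 1) := by
  have := isProbabilityMeasure_expMeasure one_pos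
  have hmeas : Measurable fun x : ℝ ↦ x / (x + 1) ^ 2 := by fun_prop
  refine Integrable.of_bound hmeas.aestronglyMeasurable (1 / 4) ?_
  filter_upwards [ae_nonneg_expMeasure 1] with x hx
  rw [norm_of_nonneg (by positivity)]
  exact div_sq_add_one_le_quarter x

lemma exp_one_div_sixteen_le_integral_div_sq_add_one :
    exp 1 / 16 ≤ ∫ x, x / (x + 1) ^ 2 ∂expMeasure 1 :=
  calc exp 1 / 16 = ∫ x, x * exp (1 - x) / 4 ∂expMeasure 1 := by
        rw [integral_div, integral_mul_exp_one_sub_expMeasure_one]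
        ring
    _ ≤ ∫ x, x / (x + 1) ^ 2 ∂expMeasure 1 := by
        refine integral_mono_of_nonneg ?_ integrable_div_sq_add_one_expMeasure_one ?_ <;>
          filter_upwards [ae_nonneg_expMeasure 1] with x hx
        · positivity
        · exact mul_exp_one_sub_div_four_le hx

/-- Let `X ~ Exp(1)` and `g(x) = x/(x+1)²`. The variance of the normalized
SLNR gain `g(X)/E[g(X)]` (whose mean is `1`) is strictly smaller than the variance of `X`,
which equals `1`. -/
theorem slnr_gain_smaller_variance :
    (∫ x, (x - 1) ^ 2 ∂(expMeasure 1)) = 1 ∧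
    (∫ x, ((x / (x + 1) ^ 2) / (∫ y, y / (y + 1) ^ 2 ∂(expMeasure 1)) - 1) ^ 2
        ∂(expMeasure 1)) < 1 := by
  have := isProbabilityMeasure_expMeasure one_pos
  refine ⟨integral_sub_one_sq_expMeasure_one, ?_⟩
  have hm := exp_one_div_sixteen_le_integral_div_sq_add_one
  have hm0 : 0 < ∫ x, x / (x + 1) ^ 2 ∂expMeasure 1 := lt_of_lt_of_le (by positivity) hm
  have hgain : ∀ᵐ x ∂expMeasure 1, x / (x + 1) ^ 2 ∈ Icc 0 (1 / 4) := by
    filter_upwards [ae_nonneg_expMeasure 1] with x hx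
    exact ⟨by positivity, div_sq_add_one_le_quarter x⟩
  calc _ ≤ 1 / 4 / ∫ x, x / (x + 1) ^ 2 ∂expMeasure 1 - 1 :=
        integral_div_integral_sub_one_sq_le (by fun_prop) hgain hm0
    _ ≤ 1 / 4 / (exp 1 / 16) - 1 := by gcongr
    _ < 1 := by
        rw [div_div_eq_mul_div, div_sub_one (by positivity), div_lt_one (by positivity)]
        linarith [add_one_lt_exp one_ne_zero]
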